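/- arXiv:1711.03258 — 2 statements merged into one kernel-verified Lean document; each statement's English description precedes it below -/
import Mathlib

section
/- Consider two-stage coefficients (a_{ij}), (b_{ij}), (α_i), (β_i) with a₁₂ = b₁₂ = 0. The K-symplectic conditions α_i a_{ij} + α_j a_{ji} = α_i α_j, α_i b_{ij} + β_j a_{ji} = α_i β_j, β_i b_{ij} + β_j b_{ji} = β_i β_j (for all i,j ∈ {1,2}) together with α₁ + α₂ = 1, β₁ + β₂ = 1, α₁, α₂, β₁, β₂ ≠ 0, are satisfied exactly by the two-parameter family α₁ = 2a₁₁, α₂ = 1 - 2a₁₁, a₂₂ = 1/2 - a₁₁, a₂₁ = 2a₁₁, β₁ = 2b₁₁, β₂ = 1 - 2b₁₁, b₂₂ = 1/2 - b₁₁, b₂₁ = 2b₁₁, parametrized by a₁₁, b₁₁ ∈ ℝ with a₁₁ ≠ 0, 1/2 and b₁₁ ≠ 0, 1/2. In particular α₁ = 1/4, α₂ = 3/4, β₁ = β₂ = 1/2, a₁₁ = 1/8, a₂₁ = 1/4, a₂₂ = 3/8, b₁₁ = 1/4, b₂₁ = 1/2, b₂₂ = 1/4 satisfies all conditions. -/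
/-- The two-stage K-symplectic conditions (for all `i,j ∈ {1,2}`), the first-order
conditions `α₁+α₂ = β₁+β₂ = 1`, and nondegeneracy `α₁,α₂,β₁,β₂ ≠ 0`. -/
def twoStageConds (a₁₁ a₁₂ a₂₁ a₂₂ b₁₁ b₁₂ b₂₁ b₂₂ α₁ α₂ β₁ β₂ : ℝ) : Prop :=
  -- α a conditions
  (α₁ * a₁₁ + α₁ * a₁₁ = α₁ * α₁) ∧ (α₁ * a₁₂ + α₂ * a₂₁ = α₁ * α₂) ∧
  (α₂ * a₂₁ + α₁ * a₁₂ = α₂ * α₁) ∧ (α₂ * a₂₂ + α₂ * a₂₂ = α₂ * α₂) ∧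
  -- α b / β a conditions
  (α₁ * b₁₁ + β₁ * a₁₁ = α₁ * β₁) ∧ (α₁ * b₁₂ + β₂ * a₂₁ = α₁ * β₂) ∧
  (α₂ * b₂₁ + β₁ * a₁₂ = α₂ * β₁) ∧ (α₂ * b₂₂ + β₂ * a₂₂ = α₂ * β₂) ∧
  -- β b conditions
  (β₁ * b₁₁ + β₁ * b₁₁ = β₁ * β₁) ∧ (β₁ * b₁₂ + β₂ * b₂₁ = β₁ * β₂) ∧
  (β₂ * b₂₁ + β₁ * b₁₂ = β₂ * β₁) ∧ (β₂ * b₂₂ + β₂ * b₂₂ = β₂ * β₂) ∧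
  -- first-order conditions
  (α₁ + α₂ = 1) ∧ (β₁ + β₂ = 1) ∧
  -- nondegeneracy
  α₁ ≠ 0 ∧ α₂ ≠ 0 ∧ β₁ ≠ 0 ∧ β₂ ≠ 0

/-- With `a₁₂ = b₁₂ = 0`, the two-stage K-symplectic + order conditions are satisfied
exactly by the two-parameter family `α₁ = 2a₁₁, α₂ = 1-2a₁₁, a₂₂ = 1/2-a₁₁, a₂₁ = 2a₁₁,
β₁ = 2b₁₁, β₂ = 1-2b₁₁, b₂₂ = 1/2-b₁₁, b₂₁ = 2b₁₁` with `a₁₁, b₁₁ ∉ {0, 1/2}`.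
In particular the specific tableau with `a₁₁ = 1/8, b₁₁ = 1/4` satisfies them. -/
theorem stmt_15 :
    (∀ a₁₁ a₂₁ a₂₂ b₁₁ b₂₁ b₂₂ α₁ α₂ β₁ β₂ : ℝ,
      twoStageConds a₁₁ 0 a₂₁ a₂₂ b₁₁ 0 b₂₁ b₂₂ α₁ α₂ β₁ β₂ ↔
        (α₁ = 2 * a₁₁ ∧ α₂ = 1 - 2 * a₁₁ ∧ a₂₂ = 1 / 2 - a₁₁ ∧ a₂₁ = 2 * a₁₁ ∧
         β₁ = 2 * b₁₁ ∧ β₂ = 1 - 2 * b₁₁ ∧ b₂₂ = 1 / 2 - b₁₁ ∧ b₂₁ = 2 * b₁₁ ∧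
         a₁₁ ≠ 0 ∧ a₁₁ ≠ 1 / 2 ∧ b₁₁ ≠ 0 ∧ b₁₁ ≠ 1 / 2)) ∧
    twoStageConds (1/8) 0 (1/4) (3/8) (1/4) 0 (1/2) (1/4) (1/4) (3/4) (1/2) (1/2) := by
  constructor
  · intro a₁₁ a₂₁ a₂₂ b₁₁ b₂₁ b₂₂ α₁ α₂ β₁ β₂
    constructor
    · rintro ⟨h1, h2, h3, h4, h5, h6, h7, h8, h9, h10, h11, h12, h13, h14,
        hα₁, hα₂, hβ₁, hβ₂⟩
      have eα₁' : α₁ = 2 * a₁₁ := mul_left_cancel₀ hα₁ (by linarith)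
      have eβ₁ : β₁ = 2 * b₁₁ := mul_left_cancel₀ hβ₁ (by linarith)
      have ea₂₁ : a₂₁ = α₁ := mul_left_cancel₀ hα₂ (by linarith)
      have eb₂₁ : b₂₁ = β₁ := mul_left_cancel₀ hβ₂ (by linarith)
      have ea₂₂ : 2 * a₂₂ = α₂ := mul_left_cancel₀ hα₂ (by linarith)
      have eb₂₂ : 2 * b₂₂ = β₂ := mul_left_cancel₀ hβ₂ (by linarith)
      refine ⟨eα₁', by linarith, by linarith, by linarith, eβ₁, by linarith,
        by linarith, by linarith, ?_, ?_, ?_, ?_⟩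
      · intro h; exact hα₁ (by rw [eα₁', h]; ring)
      · intro h; exact hα₂ (by simp [eα₁', h] at h13 ⊢; linarith)
      · intro h; exact hβ₁ (by rw [eβ₁, h]; ring)
      · intro h; exact hβ₂ (by simp [eβ₁, h] at h14 ⊢; linarith)
    · rintro ⟨e1, e2, e3, e4, e5, e6, e7, e8, ha0, ha5, hb0, hb5⟩
      subst e1 e2 e3 e4 e5 e6 e7 e8
      refine ⟨by ring, by ring, by ring, by ring, by ring, by ring, by ring, by ring,
        by ring, by ring, by ring, by ring, by ring, by ring, ?_, ?_, ?_, ?_⟩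
      · simpa using ha0
      · intro h; exact ha5 (by linarith)
      · simpa using hb0
      · intro h; exact hb5 (by linarith)
  · refine ⟨?_, ?_, ?_, ?_, ?_, ?_, ?_, ?_, ?_, ?_, ?_, ?_, ?_, ?_, ?_, ?_, ?_, ?_⟩ <;> norm_num
end

section
/- Let U_n, V_n, U_{n+1}, V_{n+1}, u_1, v_1 ∈ ℝ satisfy the implicit midpoint-type relations u₁ = U_n + (h/2)(-e^{v₁} + 1), v₁ = V_n + (h/2)(e^{u₁} - 3/2) + J/2, U_{n+1} = U_n + h(-e^{v₁} + 1), V_{n+1} = V_n + h(e^{u₁} - 3/2) + J, for fixed h, J ∈ ℝ, and view (U_{n+1}, V_{n+1}) as a differentiable function of (U_n, V_n). Then the Jacobian matrix M = ∂(U_{n+1},V_{n+1})/∂(U_n,V_n) satisfies det M = 1 (equivalently Mᵀ J₂ M = J₂ with J₂ = [[0,1],[-1,0]]), i.e. the one-stage scheme preserves the canonical symplectic two-form dU ∧ dV. -/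
/-!
With `K` the Jacobian of the stage map `z ↦ (u₁, v₁)` and `A` that of the vector field
`(u, v) ↦ (-eᵛ + 1, eᵘ - 3/2)` at the stage value, differentiating the scheme gives
`K = 1 + (h/2) A K` and `M = 1 + h A K`. Hence `(1 - (h/2) A) M = 1 + (h/2) A`: `M` is the
Cayley transform of `(h/2) A`. Since the field is Hamiltonian, `tr A = 0`, so
`det (1 - t A) = 1 + t² det A = det (1 + t A)` and `det M = 1`. For `2 × 2` matrices
`Mᵀ J₂ M = (det M) J₂`, which gives symplecticity.
-/

open Matrix

noncomputable def jacobianMatrix {n m : ℕ} (f : (Fin n → ℝ) → (Fin m → ℝ))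
    (z : Fin n → ℝ) : Matrix (Fin m) (Fin n) ℝ :=
  Matrix.of fun i j => fderiv ℝ f z (Pi.single j 1) i

lemma transpose_mul_J_mul_eq_det_smul {R : Type*} [CommRing R] (M : Matrix (Fin 2) (Fin 2) R) :
    Mᵀ * !![0, 1; -1, 0] * M = M.det • !![0, 1; -1, 0] := by
  ext i j
  fin_cases i <;> fin_cases j <;> simp [mul_apply, Fin.sum_univ_two, det_fin_two] <;> ring

lemma det_one_sub_smul_of_trace_eq_zero {R : Type*} [CommRing R] {A : Matrix (Fin 2) (Fin 2) R}
    (hA : A.trace = 0) (t : R) : (1 - t • A).det = (1 + t • A).det := by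
  rw [trace_fin_two] at hA
  simp [det_fin_two]
  linear_combination (-2 * t) * hA

/-- `K` and `M` are the Jacobians of the stage and of the step of the implicit midpoint rule
with step `2 * t`, for a vector field whose Jacobian at the stage value is `A`. -/
lemma det_eq_one_of_midpoint {R : Type*} [CommRing R] {A K M : Matrix (Fin 2) (Fin 2) R} {t : R}
    (hA : A.trace = 0) (hK : K = 1 + t • (A * K)) (hM : M = 1 + (2 * t) • (A * K)) :
    M.det = 1 := by
  have hKinv : (1 - t • A) * K = 1 := by
    rw [sub_mul, one_mul, smul_mul_assoc]
    exact sub_eq_of_eq_add hK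
  have htAK : t • (A * K) = K - 1 := by
    rw [eq_sub_iff_add_eq, add_comm]
    exact hK.symm
  have hcayley : (1 - t • A) * M = 1 + t • A := by
    rw [hM, mul_smul, htAK, mul_add, mul_smul_comm, mul_sub, hKinv, mul_one]
    module
  have hunit : IsUnit (1 - t • A).det :=
    IsUnit.of_mul_eq_one K.det (by rw [← det_mul, hKinv, det_one])
  apply hunit.mul_left_cancel
  rw [← det_mul, hcayley, mul_one, det_one_sub_smul_of_trace_eq_zero hA]

lemma jacobianMatrix_eq_toMatrix' {n m : ℕ} (f : (Fin n → ℝ) → (Fin m → ℝ)) (z : Fin n → ℝ) :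
    jacobianMatrix f z = LinearMap.toMatrix' (fderiv ℝ f z : (Fin n → ℝ) →ₗ[ℝ] (Fin m → ℝ)) := by
  ext i j
  rfl

lemma jacobianMatrix_of_eq_add_smul_comp {n : ℕ} {F S g : (Fin n → ℝ) → (Fin n → ℝ)}
    {z : Fin n → ℝ} {b : ℝ} {d : Fin n → ℝ}
    (hS : DifferentiableAt ℝ S z) (hg : DifferentiableAt ℝ g (S z))
    (hF : ∀ y, F y = y + b • g (S y) + d) :
    jacobianMatrix F z = 1 + b • (jacobianMatrix g (S z) * jacobianMatrix S z) := by
  have hFd : HasFDerivAt F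
      (ContinuousLinearMap.id ℝ _ + b • (fderiv ℝ g (S z)).comp (fderiv ℝ S z)) z := by
    rw [funext hF]
    exact ((hasFDerivAt_id z).add ((hg.hasFDerivAt.comp z hS.hasFDerivAt).const_smul b)).add_const d
  simp [jacobianMatrix_eq_toMatrix', hFd.fderiv, LinearMap.toMatrix'_comp]

/-- For `H(u, v) = G(u) + K(v)`, the Hamiltonian field is `separableField (-K') G'`. -/
def separableField (f g : ℝ → ℝ) (w : Fin 2 → ℝ) : Fin 2 → ℝ := ![f (w 1), g (w 0)]

lemma hasFDerivAt_separableField {f g : ℝ → ℝ} {w : Fin 2 → ℝ}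
    (hf : DifferentiableAt ℝ f (w 1)) (hg : DifferentiableAt ℝ g (w 0)) :
    HasFDerivAt (separableField f g)
      (ContinuousLinearMap.pi (![deriv f (w 1) • ContinuousLinearMap.proj 1,
        deriv g (w 0) • ContinuousLinearMap.proj 0] : Fin 2 → (Fin 2 → ℝ) →L[ℝ] ℝ)) w := by
  rw [hasFDerivAt_pi']
  intro i
  fin_cases i <;> simp only [separableField]
  · exact hf.hasDerivAt.comp_hasFDerivAt w (hasFDerivAt_apply 1 w)
  · exact hg.hasDerivAt.comp_hasFDerivAt w (hasFDerivAt_apply 0 w)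

lemma trace_jacobianMatrix_separableField {f g : ℝ → ℝ} {w : Fin 2 → ℝ}
    (hf : DifferentiableAt ℝ f (w 1)) (hg : DifferentiableAt ℝ g (w 0)) :
    (jacobianMatrix (separableField f g) w).trace = 0 := by
  simp [trace_fin_two, jacobianMatrix, (hasFDerivAt_separableField hf hg).fderiv]

theorem stmt_16_general (h J : ℝ) (u₁ v₁ : (Fin 2 → ℝ) → ℝ) (F : (Fin 2 → ℝ) → (Fin 2 → ℝ))
    (hu₁ : Differentiable ℝ u₁) (hv₁ : Differentiable ℝ v₁)
    (hstage₁ : ∀ z : Fin 2 → ℝ, u₁ z = z 0 + h / 2 * (-Real.exp (v₁ z) + 1))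
    (hstage₂ : ∀ z : Fin 2 → ℝ, v₁ z = z 1 + h / 2 * (Real.exp (u₁ z) - 3 / 2) + J / 2)
    (hstep₁ : ∀ z : Fin 2 → ℝ, F z 0 = z 0 + h * (-Real.exp (v₁ z) + 1))
    (hstep₂ : ∀ z : Fin 2 → ℝ, F z 1 = z 1 + h * (Real.exp (u₁ z) - 3 / 2) + J) :
    ∀ z : Fin 2 → ℝ,
      (jacobianMatrix F z).det = 1 ∧
      (jacobianMatrix F z)ᵀ * !![0, 1; -1, 0] * jacobianMatrix F z = !![0, 1; -1, 0] := by
  intro z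
  set S : (Fin 2 → ℝ) → (Fin 2 → ℝ) := fun y => ![u₁ y, v₁ y]
  set X := separableField (fun v => -Real.exp v + 1) (fun u => Real.exp u - 3 / 2)
  have hS : DifferentiableAt ℝ S z := differentiableAt_pi.2 fun i => by
    fin_cases i
    exacts [hu₁ z, hv₁ z]
  have hX : DifferentiableAt ℝ X (S z) :=
    (hasFDerivAt_separableField (by fun_prop) (by fun_prop)).differentiableAt
  have hstage : ∀ y, S y = y + (h / 2) • X (S y) + ![0, J / 2] := fun y => by
    ext i
    fin_cases i <;> simp [S, X, separableField, vecHead, vecTail] <;>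
      linarith [hstage₁ y, hstage₂ y]
  have hstep : ∀ y, F y = y + h • X (S y) + ![0, J] := fun y => by
    ext i
    fin_cases i <;> simp [S, X, separableField, vecHead, vecTail, hstep₁, hstep₂]
  have hdet : (jacobianMatrix F z).det = 1 :=
    det_eq_one_of_midpoint (trace_jacobianMatrix_separableField (by fun_prop) (by fun_prop))
      (jacobianMatrix_of_eq_add_smul_comp hS hX hstage)
      (by rw [jacobianMatrix_of_eq_add_smul_comp hS hX hstep, mul_div_cancel₀ h two_ne_zero])
  exact ⟨hdet, by rw [transpose_mul_J_mul_eq_det_smul, hdet, one_smul]⟩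

/-- The one-stage (midpoint-type) stochastic symplectic Runge--Kutta scheme for the
transformed Lotka--Volterra system `du = (-eᵛ+1)dt, dv = (eᵘ-3/2)dt + dW` preserves the
canonical symplectic form: the Jacobian `M` of the one-step map `(Uₙ,Vₙ) ↦ (Uₙ₊₁,Vₙ₊₁)`
satisfies `Mᵀ J₂ M = J₂`, equivalently `det M = 1`. -/
theorem stmt_16 (h J : ℝ) (u₁ v₁ : (Fin 2 → ℝ) → ℝ) (F : (Fin 2 → ℝ) → (Fin 2 → ℝ))
    (hu₁ : Differentiable ℝ u₁) (hv₁ : Differentiable ℝ v₁) (hF : Differentiable ℝ F)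
    (hstage₁ : ∀ z : Fin 2 → ℝ, u₁ z = z 0 + h / 2 * (-Real.exp (v₁ z) + 1))
    (hstage₂ : ∀ z : Fin 2 → ℝ, v₁ z = z 1 + h / 2 * (Real.exp (u₁ z) - 3 / 2) + J / 2)
    (hstep₁ : ∀ z : Fin 2 → ℝ, F z 0 = z 0 + h * (-Real.exp (v₁ z) + 1))
    (hstep₂ : ∀ z : Fin 2 → ℝ, F z 1 = z 1 + h * (Real.exp (u₁ z) - 3 / 2) + J) :
    ∀ z : Fin 2 → ℝ,
      (jacobianMatrix F z).det = 1 ∧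
      (jacobianMatrix F z)ᵀ * !![0, 1; -1, 0] * jacobianMatrix F z = !![0, 1; -1, 0] :=
  stmt_16_general h J u₁ v₁ F hu₁ hv₁ hstage₁ hstage₂ hstep₁ hstep₂
end
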